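/- arXiv:1806.03734 — 2 statements merged into one kernel-verified Lean document; each statement's English description precedes it below -/
import Mathlib

section
/- (Energy estimate.) Let s ∈ (1/2,1] and σ ∈ (1/s,2). There exists a constant C ≥ 1 depending only on s and σ such that the following holds. Let ν > 0, α > 0, 0 < β < ν²/2, φ(t) := α + βt, let T₀ ≤ T and let W : [T₀,T] → ℝ be continuous with φ(t) − νW(t) ≥ 0 on [T₀,T]. Suppose u : [T₀,T] → (ℤ² → ℂ) satisfies u(t)(0) = 0, each coefficient t ↦ u(t)(k) is differentiable on [T₀,T] with d/dt u(t)(k) = −(ν²/2)|k|^{2s} u(t)(k) − B_{νW(t)}(u(t),u(t))(k) for every k ≠ 0, the map t ↦ ‖u(t)‖_{σs, φ(t)} is continuous, and sup_{t∈[T₀,T]} ‖u(t)‖_{(σ+1)s, φ(t)} < ∞. If C·‖u(T₀)‖_{σs, φ(T₀)} ≤ ν²/2 − β, then for all t ∈ [T₀,T]: ‖u(t)‖_{σs, φ(t)} ≤ ‖u(T₀)‖_{σs, φ(T₀)}. -/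
/-!
Write `y_k(t) = |k|^{σs} e^{φ(t)|k|^s} u_k(t)`. Each mode satisfies
`d/dt |y_k|² ≤ -(ν² - 2β) |k|^{2s} |y_k|² + 2 |y_k| |(Λ^{σs} e^{φΛ^s} B)_k|`, where `β` comes from
`φ' = β` and `|k|^s ≤ |k|^{2s}`. Because `φ - νW ≥ 0` and `|k|^s ≤ |j|^s + |k-j|^s`, the twist in
`B_{νW}` is harmless, and splitting `|k|^{(σ-1)s+1} ≲ |j|^{(σ+1)s} + |k-j|^{(σ+1)s}` followed by
Young's inequality and `∑_{k≠0} |k|^{-2σs} < ∞` (as `σs > 1`) gives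
`∑_k |y_k| |(Λ^{σs} e^{φΛ^s} B)_k| ≤ c ‖u‖_{σs,φ} ‖u‖²_{(σ+1)s,φ}`. Hence `‖u‖_{σs,φ}` cannot
increase while `2c ‖u‖_{σs,φ} ≤ ν² - 2β`; the smallness at `T₀` leaves room for a continuity
argument that keeps this condition on all of `[T₀, T]`.
-/

open scoped ENNReal NNReal
open MeasureTheory

noncomputable section

/-- Euclidean norm of a lattice point `k ∈ ℤ² ⊆ ℝ²`. -/
def znorm (k : ℤ × ℤ) : ℝ := Real.sqrt ((k.1 : ℝ) ^ 2 + (k.2 : ℝ) ^ 2)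

/-- `j^⊥ · k` where `j^⊥ = (−j₂, j₁)`. -/
def perpDot (j k : ℤ × ℤ) : ℝ := (-(j.2 : ℝ)) * (k.1 : ℝ) + (j.1 : ℝ) * (k.2 : ℝ)

/-- Gevrey norm `‖a‖_{ρ,φ} = (∑_{k≠0} |k|^{2ρ} e^{2φ|k|^s} |a k|²)^{1/2}`, valued in `ℝ≥0∞`. -/
def gnorm (s ρ φ : ℝ) (a : ℤ × ℤ → ℂ) : ℝ≥0∞ :=
  (∑' k : ℤ × ℤ, if k = 0 then 0 else
    ENNReal.ofReal (znorm k ^ (2 * ρ) * Real.exp (2 * φ * znorm k ^ s) * ‖a k‖ ^ 2)) ^ (1/2 : ℝ)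

/-- Fourier coefficients of the twisted SQG nonlinearity `B_w(a,b)`:
`B_w(a,b)(k) = i ∑_{j≠0, j≠k} ((j^⊥·k)/|j|) e^{−w(|k|^s−|j|^s−|k−j|^s)} a(j) b(k−j)`. -/
def Bcoef (s w : ℝ) (a b : ℤ × ℤ → ℂ) (k : ℤ × ℤ) : ℂ :=
  Complex.I * ∑' j : ℤ × ℤ, if j = 0 ∨ j = k then 0 else
    ((perpDot j k / znorm j : ℝ) : ℂ) *
      ((Real.exp (-w * (znorm k ^ s - znorm j ^ s - znorm (k - j) ^ s)) : ℝ) : ℂ) *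
      a j * b (k - j)

open Set Filter Topology ComplexConjugate

lemma Real.rpow_add_le_mul_rpow_add_rpow {a b p : ℝ} (ha : 0 ≤ a) (hb : 0 ≤ b) (hp : 1 ≤ p) :
    (a + b) ^ p ≤ 2 ^ (p - 1) * (a ^ p + b ^ p) := by
  lift a to NNReal using ha
  lift b to NNReal using hb
  exact_mod_cast NNReal.rpow_add_le_mul_rpow_add_rpow a b hp

lemma ENNReal.tsum_mul_sq_le {ι : Type*} (f g : ι → ℝ≥0∞) :
    (∑' i, f i * g i) ^ 2 ≤ (∑' i, f i ^ 2) * ∑' i, g i ^ 2 := by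
  let _ : MeasurableSpace ι := ⊤
  have h := ENNReal.lintegral_mul_le_Lp_mul_Lq Measure.count Real.HolderConjugate.two_two
    (f := f) (g := g) .of_discrete .of_discrete
  simp only [lintegral_count, ENNReal.rpow_two, Pi.mul_apply] at h
  calc _ ≤ ((∑' i, f i ^ 2) ^ (1 / 2 : ℝ) * (∑' i, g i ^ 2) ^ (1 / 2 : ℝ)) ^ 2 := by gcongr
    _ = _ := by
      rw [mul_pow, ← ENNReal.rpow_two, ← ENNReal.rpow_two, ← ENNReal.rpow_mul,
        ← ENNReal.rpow_mul]
      norm_num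

lemma ENNReal.tsum_conv_sq_le {G : Type*} [AddCommGroup G] (f g : G → ℝ≥0∞) :
    ∑' k, (∑' j, f j * g (k - j)) ^ 2 ≤ (∑' j, f j ^ 2) * (∑' j, g j) ^ 2 := by
  set sqrt : ℝ≥0∞ → ℝ≥0∞ := fun x => x ^ (1 / 2 : ℝ)
  have hsqrt (x : ℝ≥0∞) : sqrt x ^ 2 = x := by
    rw [← ENNReal.rpow_two, ← ENNReal.rpow_mul]; norm_num
  have hpt (k : G) :
      (∑' j, f j * g (k - j)) ^ 2 ≤ (∑' j, f j ^ 2 * g (k - j)) * ∑' j, g j := by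
    have hcs := ENNReal.tsum_mul_sq_le (fun j => f j * sqrt (g (k - j))) (fun j => sqrt (g (k - j)))
    simp only [mul_assoc, ← sq, mul_pow, hsqrt] at hcs
    rwa [show ∑' j, g (k - j) = ∑' j, g j from (Equiv.subLeft k).tsum_eq g] at hcs
  calc _ ≤ ∑' k, (∑' j, f j ^ 2 * g (k - j)) * ∑' j, g j := ENNReal.tsum_le_tsum hpt
    _ = (∑' j, f j ^ 2 * ∑' k, g (k - j)) * ∑' j, g j := by
      rw [ENNReal.tsum_mul_right, ENNReal.tsum_comm]
      simp only [ENNReal.tsum_mul_left]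
    _ = _ := by
      simp only [show ∀ j, ∑' k, g (k - j) = ∑' k, g k from fun j => (Equiv.subRight j).tsum_eq g]
      rw [ENNReal.tsum_mul_right, sq, mul_assoc]

lemma exists_hasDerivWithinAt_sq_le {f : ℝ → ℂ} {S : Set ℝ} {t c κ α β m : ℝ} {B : ℂ}
    (hf : HasDerivWithinAt f ((m : ℂ) * f t - B) S t) :
    ∃ D, HasDerivWithinAt (fun τ => (c * Real.exp ((α + β * τ) * κ) * ‖f τ‖) ^ 2) D S t ∧
      D ≤ 2 * (c * Real.exp ((α + β * t) * κ)) ^ 2 * ((β * κ + m) * ‖f t‖ ^ 2 + ‖f t‖ * ‖B‖) := by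
  have hE : HasDerivWithinAt (fun τ => c * Real.exp ((α + β * τ) * κ))
      (c * (Real.exp ((α + β * t) * κ) * (β * κ))) S t := by
    simpa using ((((hasDerivWithinAt_id t S).const_mul β).const_add α).mul_const κ).exp.const_mul c
  refine ⟨_, by simpa only [mul_pow] using (hE.fun_pow 2).fun_mul hf.norm_sq, ?_⟩
  have hinner : inner ℝ (f t) ((m : ℂ) * f t - B) ≤ m * ‖f t‖ ^ 2 + ‖f t‖ * ‖B‖ := by
    rw [inner_sub_right, ← Complex.real_smul, real_inner_smul_right, real_inner_self_eq_norm_sq]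
    linarith [neg_abs_le (inner ℝ (f t) B), abs_real_inner_le_norm (f t) B]
  calc _ = 2 * (c * Real.exp ((α + β * t) * κ)) ^ 2 *
        (β * κ * ‖f t‖ ^ 2 + inner ℝ (f t) ((m : ℂ) * f t - B)) := by push_cast; ring
    _ ≤ _ := mul_le_mul_of_nonneg_left (by linarith) (by positivity)

/-- The modes are summed over finite sets `F` first, where the fundamental theorem of calculus
applies; the error `κ (∑ y - ∑_F y)` then vanishes in the limit by dominated convergence. -/
theorem tsum_le_tsum_of_hasDerivWithinAt_le {ι : Type*} [Countable ι] {r y g : ℝ → ι → ℝ}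
    {a b κ M : ℝ} (hab : a ≤ b)
    (hr : ∀ τ ∈ Icc a b, ∀ k, ∃ D, HasDerivWithinAt (fun t => r t k) D (Icc a b) τ ∧
      D ≤ g τ k - κ * y τ k)
    (hy : ∀ k, ContinuousOn (fun t => y t k) (Icc a b)) (hy0 : ∀ τ k, 0 ≤ y τ k)
    (hys : ∀ τ ∈ Icc a b, Summable (y τ)) (hyM : ∀ τ ∈ Icc a b, ∑' k, y τ k ≤ M)
    (hg : ∀ τ ∈ Icc a b, ∀ F : Finset ι, ∑ k ∈ F, g τ k ≤ κ * ∑' k, y τ k)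
    (hra : Summable (r a)) (hrb : Summable (r b)) :
    ∑' k, r b k ≤ ∑' k, r a k := by
  choose! D hD hDle using hr
  set Y := fun τ => ∑' k, y τ k
  set S := fun (F : Finset ι) τ => ∑ k ∈ F, y τ k
  have hSY (F : Finset ι) {τ} (hτ : τ ∈ Icc a b) : S F τ ≤ Y τ :=
    Summable.sum_le_tsum F (fun k _ => hy0 τ k) (hys τ hτ)
  have hS (F : Finset ι) : ContinuousOn (S F) (Icc a b) :=
    continuousOn_finsetSum F fun k _ => hy k
  have hYmeas : AEStronglyMeasurable Y (volume.restrict (Icc a b)) :=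
    aestronglyMeasurable_of_tendsto_ae atTop
      (fun F => (hS F).aestronglyMeasurable measurableSet_Icc)
      (ae_restrict_of_forall_mem measurableSet_Icc fun τ hτ => (hys τ hτ).hasSum)
  have hYbound : ∀ τ ∈ Icc a b, ‖Y τ‖ ≤ M := fun τ hτ => by
    rw [Real.norm_of_nonneg (tsum_nonneg (hy0 τ))]
    exact hyM τ hτ
  have hYint : IntegrableOn Y (Icc a b) :=
    Integrable.of_bound hYmeas M (ae_restrict_of_forall_mem measurableSet_Icc hYbound)
  have hstep (F : Finset ι) :
      ∑ k ∈ F, r b k - ∑ k ∈ F, r a k ≤ ∫ τ in a..b, κ * (Y τ - S F τ) := by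
    refine intervalIntegral.sub_le_integral_of_hasDeriv_right_of_le hab
      (g' := fun τ => ∑ k ∈ F, D τ k)
      (continuousOn_finsetSum F fun k _ τ hτ => (hD τ hτ k).continuousWithinAt)
      (fun τ hτ => ?_) ((hYint.sub (hS F).integrableOn_Icc).const_mul κ) (fun τ hτ => ?_)
    · exact ((HasDerivWithinAt.fun_sum fun k _ => hD τ (Ioo_subset_Icc_self hτ) k).hasDerivAt
        (Icc_mem_nhds hτ.1 hτ.2)).hasDerivWithinAt
    · have hτ' := Ioo_subset_Icc_self hτ
      calc ∑ k ∈ F, D τ k ≤ ∑ k ∈ F, (g τ k - κ * y τ k) :=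
            Finset.sum_le_sum fun k _ => hDle τ hτ' k
        _ = ∑ k ∈ F, g τ k - κ * S F τ := by rw [Finset.sum_sub_distrib, Finset.mul_sum]
        _ ≤ κ * (Y τ - S F τ) := by linarith [hg τ hτ' F]
  have hlim : Tendsto (fun F : Finset ι => ∫ τ in a..b, κ * (Y τ - S F τ)) atTop (𝓝 0) := by
    have hIoc : uIoc a b ⊆ Icc a b := by rw [uIoc_of_le hab]; exact Ioc_subset_Icc_self
    simpa using intervalIntegral.tendsto_integral_filter_of_dominated_convergence
      (F := fun F τ => κ * (Y τ - S F τ)) (f := fun _ => 0) (fun _ => |κ| * M)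
      (Eventually.of_forall fun F =>
        ((hYmeas.sub ((hS F).aestronglyMeasurable measurableSet_Icc)).const_mul κ).mono_measure
          (Measure.restrict_mono hIoc le_rfl))
      (Eventually.of_forall fun F => Eventually.of_forall fun τ hτ => by
        rw [norm_mul, Real.norm_eq_abs, Real.norm_of_nonneg (sub_nonneg.mpr (hSY F (hIoc hτ)))]
        gcongr
        linarith [hyM τ (hIoc hτ), Finset.sum_nonneg fun k (_ : k ∈ F) => hy0 τ k])
      intervalIntegrable_const
      (Eventually.of_forall fun τ hτ => by
        have hYτ : Tendsto (S · τ) atTop (𝓝 (Y τ)) := (hys τ (hIoc hτ)).hasSum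
        simpa using ((tendsto_const_nhds (x := Y τ)).sub hYτ).const_mul κ)
  have := le_of_tendsto_of_tendsto' (hrb.hasSum.sub hra.hasSum) hlim fun F => by
    simpa only [Finset.sum_sub_distrib] using hstep F
  linarith

theorem ContinuousOn.le_left_of_forall_le_of_mem {α : Type*} [TopologicalSpace α]
    [LinearOrder α] [OrderClosedTopology α] {X : ℝ → α} {a b : ℝ} {U : Set α}
    (hX : ContinuousOn X (Icc a b)) (hU : IsOpen U) (haU : Iic (X a) ⊆ U)
    (hdecay : ∀ t₁ ∈ Icc a b, ∀ t₂ ∈ Icc t₁ b, (∀ τ ∈ Icc t₁ t₂, X τ ∈ U) → X t₂ ≤ X t₁) :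
    ∀ t ∈ Icc a b, X t ≤ X a := by
  refine IsClosed.Icc_subset_of_forall_mem_nhdsWithin (s := {t | X t ≤ X a}) ?_ le_rfl ?_
  · rw [inter_comm]
    exact hX.preimage_isClosed_of_isClosed isClosed_Icc isClosed_Iic
  rintro x ⟨hxa, hx⟩
  have hxI : x ∈ Icc a b := Ico_subset_Icc_self hx
  have hnhds : X ⁻¹' U ∩ Icc a b ∈ 𝓝[≥] x := by
    have hIcc : Icc a b ∈ 𝓝[≥] x :=
      mem_of_superset (Icc_mem_nhdsGE hx.2) (Icc_subset_Icc_left hx.1)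
    exact inter_mem (nhdsWithin_le_of_mem hIcc
      ((hX x hxI).preimage_mem_nhdsWithin (hU.mem_nhds (haU hxa)))) hIcc
  obtain ⟨c, hxc, hc⟩ := mem_nhdsGE_iff_exists_Ico_subset.mp hnhds
  filter_upwards [Ioo_mem_nhdsGT hxc] with t ht
  have hsub : Icc x t ⊆ X ⁻¹' U ∩ Icc a b := (Icc_subset_Ico_right ht.2).trans hc
  exact (hdecay x hxI t ⟨ht.1.le, (hsub (right_mem_Icc.mpr ht.1.le)).2.2⟩
    fun τ hτ => (hsub hτ).1).trans hxa

def latticeToComplex (k : ℤ × ℤ) : ℂ := ⟨k.1, k.2⟩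

lemma latticeToComplex_add (j l : ℤ × ℤ) :
    latticeToComplex (j + l) = latticeToComplex j + latticeToComplex l := by
  apply Complex.ext <;> simp [latticeToComplex]

lemma znorm_eq_norm (k : ℤ × ℤ) : znorm k = ‖latticeToComplex k‖ := by
  simp [znorm, latticeToComplex, Complex.norm_def, Complex.normSq_apply, sq]

lemma znorm_nonneg (k : ℤ × ℤ) : 0 ≤ znorm k := Real.sqrt_nonneg _

@[simp] lemma znorm_zero : znorm 0 = 0 := by simp [znorm]

lemma znorm_add_le (j l : ℤ × ℤ) : znorm (j + l) ≤ znorm j + znorm l := by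
  simpa only [znorm_eq_norm, latticeToComplex_add] using norm_add_le _ _

lemma one_le_znorm {k : ℤ × ℤ} (hk : k ≠ 0) : 1 ≤ znorm k := by
  have h : k.1 ≠ 0 ∨ k.2 ≠ 0 := by
    by_contra! h
    exact hk (Prod.ext h.1 h.2)
  have hsq : (1 : ℤ) ≤ k.1 ^ 2 + k.2 ^ 2 := by
    rcases h with h | h <;> nlinarith [sq_pos_of_ne_zero h, sq_nonneg k.1, sq_nonneg k.2]
  exact Real.one_le_sqrt.mpr (by exact_mod_cast hsq)

lemma znorm_pos {k : ℤ × ℤ} (hk : k ≠ 0) : 0 < znorm k := one_pos.trans_le (one_le_znorm hk)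

lemma perpDot_eq_im (j k : ℤ × ℤ) :
    perpDot j k = (conj (latticeToComplex j) * latticeToComplex k).im := by
  simp [perpDot, latticeToComplex]
  ring

lemma abs_perpDot_le (j k : ℤ × ℤ) : |perpDot j k| ≤ znorm j * znorm k := by
  rw [perpDot_eq_im, znorm_eq_norm, znorm_eq_norm, ← Complex.norm_conj (latticeToComplex j),
    ← norm_mul]
  exact Complex.abs_im_le_norm _

lemma summable_znorm_rpow_neg {q : ℝ} (hq : 2 < q) :
    Summable fun k : ℤ × ℤ => znorm k ^ (-q) := by
  have hsup := (EisensteinSeries.summable_one_div_norm_rpow hq).comp_injective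
    (finTwoArrowEquiv ℤ).symm.injective
  refine hsup.of_nonneg_of_le (fun k => Real.rpow_nonneg (znorm_nonneg k) _) fun k => ?_
  rcases eq_or_ne k 0 with rfl | hk
  · simp only [znorm_zero, Real.zero_rpow (by linarith : -q ≠ 0), Function.comp_apply]
    positivity
  have hle : ‖(finTwoArrowEquiv ℤ).symm k‖ ≤ znorm k := by
    refine pi_norm_le_iff_of_nonneg (znorm_nonneg k) |>.mpr fun i => ?_
    fin_cases i <;> simp [znorm, Int.norm_eq_abs] <;> apply Real.abs_le_sqrt <;> nlinarith
  have hpos : 0 < ‖(finTwoArrowEquiv ℤ).symm k‖ := by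
    simpa using ((finTwoArrowEquiv ℤ).symm.injective.ne hk : _ ≠ (finTwoArrowEquiv ℤ).symm 0)
  exact Real.rpow_le_rpow_of_nonpos hpos hle (by linarith)

/-- Since `w ≤ φ` and `|k|^s ≤ |j|^s + |l|^s`, the twist `e^{-w(|k|^s - |j|^s - |l|^s)}` costs
nothing, and the derivative `|k|` falling on the product is split over the two factors. -/
lemma znorm_rpow_mul_exp_mul_perpDot_le {s θ ρ φ w : ℝ} (hs0 : 0 ≤ s) (hs1 : s ≤ 1)
    (hθ : 0 ≤ θ) (hθρ : θ + 1 ≤ ρ) (hw : w ≤ φ) {j l : ℤ × ℤ} (hj : j ≠ 0) (hl : l ≠ 0) :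
    znorm (j + l) ^ θ * Real.exp (φ * znorm (j + l) ^ s) * (|perpDot j (j + l)| / znorm j) *
        Real.exp (-w * (znorm (j + l) ^ s - znorm j ^ s - znorm l ^ s)) ≤
      2 ^ θ * (znorm j ^ ρ + znorm l ^ ρ) *
        (Real.exp (φ * znorm j ^ s) * Real.exp (φ * znorm l ^ s)) := by
  set k := j + l
  have htri : znorm k ≤ znorm j + znorm l := znorm_add_le j l
  have hsub : znorm k ^ s ≤ znorm j ^ s + znorm l ^ s :=
    (Real.rpow_le_rpow (znorm_nonneg k) htri hs0).trans
      (Real.rpow_add_le_add_rpow (znorm_nonneg j) (znorm_nonneg l) hs0 hs1)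
  have hexp : Real.exp (φ * znorm k ^ s) *
      Real.exp (-w * (znorm k ^ s - znorm j ^ s - znorm l ^ s)) ≤
      Real.exp (φ * znorm j ^ s) * Real.exp (φ * znorm l ^ s) := by
    rw [← Real.exp_add, ← Real.exp_add, Real.exp_le_exp]
    nlinarith
  have hperp : |perpDot j k| / znorm j ≤ znorm k := by
    rw [div_le_iff₀ (znorm_pos hj), mul_comm]
    exact abs_perpDot_le j k
  have hpow : znorm k ^ θ * znorm k ≤ 2 ^ θ * (znorm j ^ ρ + znorm l ^ ρ) := calc
    znorm k ^ θ * znorm k = znorm k ^ (θ + 1) :=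
      (Real.rpow_add_one' (znorm_nonneg k) (by linarith)).symm
    _ ≤ (znorm j + znorm l) ^ (θ + 1) := Real.rpow_le_rpow (znorm_nonneg k) htri (by linarith)
    _ ≤ 2 ^ θ * (znorm j ^ (θ + 1) + znorm l ^ (θ + 1)) := by
      simpa using Real.rpow_add_le_mul_rpow_add_rpow (znorm_nonneg j) (znorm_nonneg l)
        (by linarith : 1 ≤ θ + 1)
    _ ≤ 2 ^ θ * (znorm j ^ ρ + znorm l ^ ρ) := by
      have hmono {m : ℤ × ℤ} (hm : m ≠ 0) : znorm m ^ (θ + 1) ≤ znorm m ^ ρ :=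
        Real.rpow_le_rpow_of_exponent_le (one_le_znorm hm) hθρ
      exact mul_le_mul_of_nonneg_left (add_le_add (hmono hj) (hmono hl)) (by positivity)
  calc _ = (znorm k ^ θ * (|perpDot j k| / znorm j)) * (Real.exp (φ * znorm k ^ s) *
        Real.exp (-w * (znorm k ^ s - znorm j ^ s - znorm l ^ s))) := by ring
    _ ≤ (znorm k ^ θ * znorm k) * (Real.exp (φ * znorm j ^ s) * Real.exp (φ * znorm l ^ s)) :=
      mul_le_mul (mul_le_mul_of_nonneg_left hperp (Real.rpow_nonneg (znorm_nonneg k) θ)) hexp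
        (by positivity) (mul_nonneg (Real.rpow_nonneg (znorm_nonneg k) θ) (znorm_nonneg k))
    _ ≤ _ := by gcongr

/-- The modulus of the `k`-th Fourier coefficient of `Λ^ρ e^{φΛ^s} a`. -/
def gweight (s ρ φ : ℝ) (a : ℤ × ℤ → ℂ) (k : ℤ × ℤ) : ℝ :=
  znorm k ^ ρ * Real.exp (φ * znorm k ^ s) * ‖a k‖

lemma gweight_nonneg (s ρ φ : ℝ) (a : ℤ × ℤ → ℂ) (k : ℤ × ℤ) : 0 ≤ gweight s ρ φ a k :=
  mul_nonneg (mul_nonneg (Real.rpow_nonneg (znorm_nonneg k) ρ) (Real.exp_pos _).le) (norm_nonneg _)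

@[simp] lemma gweight_apply_zero {s ρ : ℝ} (hρ : ρ ≠ 0) (φ : ℝ) (a : ℤ × ℤ → ℂ) :
    gweight s ρ φ a 0 = 0 := by
  simp [gweight, Real.zero_rpow hρ]

lemma gweight_mono {s ρ ρ' : ℝ} (hρ : ρ ≤ ρ') (φ : ℝ) {a : ℤ × ℤ → ℂ} (ha : a 0 = 0)
    (k : ℤ × ℤ) : gweight s ρ φ a k ≤ gweight s ρ' φ a k := by
  rcases eq_or_ne k 0 with rfl | hk
  · simp [gweight, ha]
  unfold gweight
  have := Real.rpow_le_rpow_of_exponent_le (one_le_znorm hk) hρ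
  gcongr

lemma gnorm_sq {s ρ : ℝ} (hρ : ρ ≠ 0) (φ : ℝ) (a : ℤ × ℤ → ℂ) :
    gnorm s ρ φ a ^ 2 = ∑' k, ENNReal.ofReal (gweight s ρ φ a k ^ 2) := by
  rw [gnorm, ← ENNReal.rpow_natCast, ← ENNReal.rpow_mul]
  norm_num
  refine tsum_congr fun k => ?_
  rcases eq_or_ne k 0 with rfl | hk
  · simp [hρ]
  rw [if_neg hk, gweight, mul_pow, mul_pow, ← Real.rpow_mul_natCast (znorm_nonneg k),
    ← Real.exp_nat_mul]
  push_cast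
  ring_nf

lemma ofReal_gweight_Bcoef_le {s θ ρ φ w : ℝ} (hs0 : 0 ≤ s) (hs1 : s ≤ 1) (hθ : 0 ≤ θ)
    (hθρ : θ + 1 ≤ ρ) (hw : w ≤ φ) (a : ℤ × ℤ → ℂ) (k : ℤ × ℤ) :
    ENNReal.ofReal (gweight s θ φ (Bcoef s w a a) k) ≤
      2 * ENNReal.ofReal (2 ^ θ) * ∑' j, ENNReal.ofReal (gweight s ρ φ a j) *
        ENNReal.ofReal (gweight s 0 φ a (k - j)) := by
  set A := fun j => ENNReal.ofReal (gweight s ρ φ a j)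
  set G := fun j => ENNReal.ofReal (gweight s 0 φ a j)
  set term : ℤ × ℤ → ℂ := fun j => if j = 0 ∨ j = k then 0 else
    ((perpDot j k / znorm j : ℝ) : ℂ) *
      ((Real.exp (-w * (znorm k ^ s - znorm j ^ s - znorm (k - j) ^ s)) : ℝ) : ℂ) *
      a j * a (k - j)
  set W := znorm k ^ θ * Real.exp (φ * znorm k ^ s)
  have hW : 0 ≤ W := mul_nonneg (Real.rpow_nonneg (znorm_nonneg k) θ) (Real.exp_pos _).le
  have hterm (j : ℤ × ℤ) :
      ENNReal.ofReal W * ‖term j‖ₑ ≤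
        ENNReal.ofReal (2 ^ θ) * (A j * G (k - j) + G j * A (k - j)) := by
    by_cases hj : j = 0 ∨ j = k
    · simp [term, hj]
    obtain ⟨hj0, hjk⟩ := not_or.mp hj
    have hkj : k - j ≠ 0 := sub_ne_zero.mpr (Ne.symm hjk)
    have key := znorm_rpow_mul_exp_mul_perpDot_le hs0 hs1 hθ hθρ hw hj0 hkj
    rw [add_sub_cancel] at key
    simp only [A, G, term, if_neg hj, ← ofReal_norm, ← ENNReal.ofReal_mul hW,
      ← ENNReal.ofReal_mul (gweight_nonneg _ _ _ _ _), ← ENNReal.ofReal_add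
        (mul_nonneg (gweight_nonneg _ _ _ _ _) (gweight_nonneg _ _ _ _ _))
        (mul_nonneg (gweight_nonneg _ _ _ _ _) (gweight_nonneg _ _ _ _ _)),
      ← ENNReal.ofReal_mul (by positivity : (0 : ℝ) ≤ 2 ^ θ)]
    refine ENNReal.ofReal_le_ofReal ?_
    simp only [gweight, W, norm_mul, Complex.norm_real, Real.norm_eq_abs, abs_div,
      abs_of_nonneg (znorm_nonneg j), abs_of_pos (Real.exp_pos _), Real.rpow_zero, one_mul]
    calc _ = _ * (‖a j‖ * ‖a (k - j)‖) := by ring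
      _ ≤ _ * (‖a j‖ * ‖a (k - j)‖) := mul_le_mul_of_nonneg_right key (by positivity)
      _ = _ := by ring
  have hsymm : ∑' j, G j * A (k - j) = ∑' j, A j * G (k - j) := by
    rw [← (Equiv.subLeft k).tsum_eq]
    simp [mul_comm]
  calc ENNReal.ofReal (gweight s θ φ (Bcoef s w a a) k)
      = ENNReal.ofReal W * ‖∑' j, term j‖ₑ := by
        rw [gweight, ENNReal.ofReal_mul hW, ofReal_norm, Bcoef, enorm_mul,
          ← ofReal_norm Complex.I, Complex.norm_I, ENNReal.ofReal_one, one_mul]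
    _ ≤ ∑' j, ENNReal.ofReal W * ‖term j‖ₑ := by
      rw [ENNReal.tsum_mul_left]
      gcongr
      exact enorm_tsum_le_tsum_enorm
    _ ≤ ∑' j, ENNReal.ofReal (2 ^ θ) * (A j * G (k - j) + G j * A (k - j)) :=
      ENNReal.tsum_le_tsum hterm
    _ = _ := by
      rw [ENNReal.tsum_mul_left, ENNReal.tsum_add, hsymm]
      ring

lemma tsum_ofReal_gweight_sq {s ρ : ℝ} (hρ : ρ ≠ 0) (φ : ℝ) (a : ℤ × ℤ → ℂ) :
    ∑' k, ENNReal.ofReal (gweight s ρ φ a k) ^ 2 = gnorm s ρ φ a ^ 2 := by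
  rw [gnorm_sq hρ]
  exact tsum_congr fun k => (ENNReal.ofReal_pow (gweight_nonneg _ _ _ _ _) 2).symm

/-- Cauchy–Schwarz against the weights `|k|^{-ρ}`; at `k = 0`, where `0 ^ (-ρ) = 0`, the
mean-zero condition is what makes the term vanish on the left as well. -/
lemma tsum_ofReal_gweight_zero_sq_le {s ρ : ℝ} (hρ : ρ ≠ 0) (φ : ℝ) {a : ℤ × ℤ → ℂ}
    (ha : a 0 = 0) :
    (∑' k, ENNReal.ofReal (gweight s 0 φ a k)) ^ 2 ≤
      (∑' k, ENNReal.ofReal (znorm k ^ (-(2 * ρ)))) * gnorm s ρ φ a ^ 2 := by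
  have hsplit (k : ℤ × ℤ) : ENNReal.ofReal (gweight s 0 φ a k) =
      ENNReal.ofReal (znorm k ^ (-ρ)) * ENNReal.ofReal (gweight s ρ φ a k) := by
    rw [← ENNReal.ofReal_mul (Real.rpow_nonneg (znorm_nonneg k) _)]
    rcases eq_or_ne k 0 with rfl | hk
    · simp [gweight, ha]
    simp only [gweight, Real.rpow_zero, Real.rpow_neg (znorm_nonneg k)]
    rw [← mul_assoc, ← mul_assoc, inv_mul_cancel₀ (Real.rpow_pos_of_pos (znorm_pos hk) ρ).ne']
  have hweight (k : ℤ × ℤ) :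
      ENNReal.ofReal (znorm k ^ (-ρ)) ^ 2 = ENNReal.ofReal (znorm k ^ (-(2 * ρ))) := by
    rw [← ENNReal.ofReal_pow (Real.rpow_nonneg (znorm_nonneg k) _),
      ← Real.rpow_mul_natCast (znorm_nonneg k)]
    ring_nf
  simp only [hsplit]
  simpa only [hweight, tsum_ofReal_gweight_sq hρ] using ENNReal.tsum_mul_sq_le
    (fun k => ENNReal.ofReal (znorm k ^ (-ρ))) (fun k => ENNReal.ofReal (gweight s ρ φ a k))

theorem exists_tsum_gweight_mul_gweight_Bcoef_le {s σ : ℝ} (hs : 1 / 2 ≤ s) (hs1 : s ≤ 1)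
    (hσs : 1 < σ * s) :
    ∃ c : ℝ≥0∞, c ≠ ⊤ ∧ ∀ φ w : ℝ, w ≤ φ → ∀ a : ℤ × ℤ → ℂ, a 0 = 0 →
      ∑' k, ENNReal.ofReal (gweight s (σ * s) φ a k * gweight s (σ * s) φ (Bcoef s w a a) k) ≤
        c * gnorm s (σ * s) φ a * gnorm s ((σ + 1) * s) φ a ^ 2 := by
  have hσ : 1 ≤ σ := by nlinarith
  set L := ∑' k, ENNReal.ofReal (znorm k ^ (-(2 * (σ * s))))
  have hL : L ≠ ⊤ := (summable_znorm_rpow_neg (by linarith)).tsum_ofReal_ne_top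
  set K := 2 * ENNReal.ofReal (2 ^ ((σ - 1) * s))
  refine ⟨K * L ^ (1 / 2 : ℝ), by finiteness, fun φ w hw a ha => ?_⟩
  set X := gnorm s (σ * s) φ a
  set Y := gnorm s ((σ + 1) * s) φ a
  set A := fun k => ENNReal.ofReal (gweight s ((σ + 1) * s) φ a k)
  set R := fun k => ENNReal.ofReal (gweight s ((σ - 1) * s) φ (Bcoef s w a a) k)
  set G := fun k => ENNReal.ofReal (gweight s 0 φ a k)
  have hsplit (k : ℤ × ℤ) : ENNReal.ofReal (gweight s (σ * s) φ a k *
      gweight s (σ * s) φ (Bcoef s w a a) k) = A k * R k := by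
    simp only [A, R]
    rw [← ENNReal.ofReal_mul (gweight_nonneg _ _ _ _ _)]
    congr 1
    have hz := znorm_nonneg k
    have hpow : znorm k ^ (σ * s) * znorm k ^ (σ * s) =
        znorm k ^ ((σ + 1) * s) * znorm k ^ ((σ - 1) * s) := by
      rw [← Real.rpow_add' hz (by nlinarith), ← Real.rpow_add' hz (by nlinarith)]
      ring_nf
    simp only [gweight]
    linear_combination (Real.exp (φ * znorm k ^ s) * ‖a k‖ *
      (Real.exp (φ * znorm k ^ s) * ‖Bcoef s w a a k‖)) * hpow
  have hR : ∑' k, R k ^ 2 ≤ K ^ 2 * (Y ^ 2 * (∑' k, G k) ^ 2) := calc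
    ∑' k, R k ^ 2 ≤ ∑' k, (K * ∑' j, A j * G (k - j)) ^ 2 := by
      gcongr with k
      exact ofReal_gweight_Bcoef_le (by linarith) hs1 (by nlinarith) (by linarith) hw a k
    _ = K ^ 2 * ∑' k, (∑' j, A j * G (k - j)) ^ 2 := by
      simp only [mul_pow, ENNReal.tsum_mul_left]
    _ ≤ K ^ 2 * (Y ^ 2 * (∑' k, G k) ^ 2) := by
      rw [← tsum_ofReal_gweight_sq (by nlinarith) φ a]
      gcongr
      exact ENNReal.tsum_conv_sq_le A G
  have hG := tsum_ofReal_gweight_zero_sq_le (s := s) (by nlinarith : σ * s ≠ 0) φ ha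
  rw [← ENNReal.pow_le_pow_left_iff two_ne_zero]
  calc _ = (∑' k, A k * R k) ^ 2 := by simp only [hsplit]
    _ ≤ Y ^ 2 * ∑' k, R k ^ 2 := by
      rw [← tsum_ofReal_gweight_sq (by nlinarith) φ a]
      exact ENNReal.tsum_mul_sq_le A R
    _ ≤ Y ^ 2 * (K ^ 2 * (Y ^ 2 * (L * X ^ 2))) := by
      gcongr
      exact hR.trans (by gcongr)
    _ = (K * L ^ (1 / 2 : ℝ) * X * Y ^ 2) ^ 2 := by
      have hsqrt : (L ^ (1 / 2 : ℝ)) ^ 2 = L := by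
        rw [← ENNReal.rpow_two, ← ENNReal.rpow_mul]; norm_num
      rw [show (K * L ^ (1 / 2 : ℝ) * X * Y ^ 2) ^ 2 =
        K ^ 2 * (L ^ (1 / 2 : ℝ)) ^ 2 * X ^ 2 * (Y ^ 2) ^ 2 by ring, hsqrt]
      ring

lemma summable_gweight_sq {s ρ φ : ℝ} {a : ℤ × ℤ → ℂ} (hρ : ρ ≠ 0) (ha : gnorm s ρ φ a ≠ ⊤) :
    Summable fun k => gweight s ρ φ a k ^ 2 := by
  have h := ENNReal.pow_ne_top (n := 2) ha
  rw [gnorm_sq hρ] at h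
  exact (ENNReal.summable_toReal h).congr fun k => ENNReal.toReal_ofReal (sq_nonneg _)

lemma gnorm_sq_eq_ofReal_tsum {s ρ φ : ℝ} {a : ℤ × ℤ → ℂ} (hρ : ρ ≠ 0)
    (ha : Summable fun k => gweight s ρ φ a k ^ 2) :
    gnorm s ρ φ a ^ 2 = ENNReal.ofReal (∑' k, gweight s ρ φ a k ^ 2) := by
  rw [gnorm_sq hρ, ENNReal.ofReal_tsum_of_nonneg (fun _ => sq_nonneg _) ha]

lemma exists_hasDerivWithinAt_gweight_sq_le {s ρ ν α β : ℝ} (hs : 0 ≤ s) (hρ : 0 < ρ)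
    (hβ : 0 ≤ β) {W : ℝ → ℝ} {u : ℝ → ℤ × ℤ → ℂ} {S : Set ℝ} {t : ℝ} (k : ℤ × ℤ)
    (hu : k ≠ 0 → HasDerivWithinAt (fun τ => u τ k)
      (((-(ν ^ 2 / 2) * znorm k ^ (2 * s) : ℝ) : ℂ) * u t k - Bcoef s (ν * W t) (u t) (u t) k)
      S t) :
    ∃ D, HasDerivWithinAt (fun τ => gweight s ρ (α + β * τ) (u τ) k ^ 2) D S t ∧
      D ≤ 2 * (gweight s ρ (α + β * t) (u t) k *
          gweight s ρ (α + β * t) (Bcoef s (ν * W t) (u t) (u t)) k) -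
        (ν ^ 2 - 2 * β) * gweight s (ρ + s) (α + β * t) (u t) k ^ 2 := by
  rcases eq_or_ne k 0 with rfl | hk
  · refine ⟨0, ?_, ?_⟩
    · simpa [hρ.ne'] using hasDerivWithinAt_const t S (0 : ℝ)
    · simp [hρ.ne', (by linarith : ρ + s ≠ 0)]
  obtain ⟨D, hD, hDle⟩ := exists_hasDerivWithinAt_sq_le (c := znorm k ^ ρ)
    (κ := znorm k ^ s) (α := α) (β := β) (hu hk)
  refine ⟨D, hD, hDle.trans ?_⟩
  have hz := znorm_nonneg k
  have hκ : znorm k ^ s ≤ (znorm k ^ s) ^ 2 := by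
    nlinarith [Real.one_le_rpow (one_le_znorm hk) hs]
  have hκ2 : znorm k ^ (2 * s) = (znorm k ^ s) ^ 2 := by
    rw [← Real.rpow_mul_natCast hz]; ring_nf
  simp only [gweight, Real.rpow_add (znorm_pos hk), hκ2]
  have hgrowth := mul_le_mul_of_nonneg_left hκ (by positivity :
    0 ≤ 2 * β * (znorm k ^ ρ * Real.exp ((α + β * t) * znorm k ^ s)) ^ 2 * ‖u t k‖ ^ 2)
  linear_combination hgrowth

lemma continuousOn_gweight_sq {s ρ α β : ℝ} (hρ : ρ ≠ 0) {u : ℝ → ℤ × ℤ → ℂ} {S : Set ℝ}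
    (k : ℤ × ℤ) (hu : k ≠ 0 → ContinuousOn (fun τ => u τ k) S) :
    ContinuousOn (fun τ => gweight s ρ (α + β * τ) (u τ) k ^ 2) S := by
  rcases eq_or_ne k 0 with rfl | hk
  · simp [hρ, continuousOn_const]
  have := hu hk
  simp only [gweight]
  fun_prop

lemma sum_two_mul_gweight_mul_gweight_le {s ρ φ κ : ℝ} {c : ℝ≥0∞} {a b : ℤ × ℤ → ℂ}
    (hρs : ρ + s ≠ 0) (hκ : 0 ≤ κ) (ha : Summable fun k => gweight s (ρ + s) φ a k ^ 2)
    (hab : ∑' k, ENNReal.ofReal (gweight s ρ φ a k * gweight s ρ φ b k) ≤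
      c * gnorm s ρ φ a * gnorm s (ρ + s) φ a ^ 2)
    (hsmall : 2 * c * gnorm s ρ φ a ≤ ENNReal.ofReal κ) (F : Finset (ℤ × ℤ)) :
    ∑ k ∈ F, 2 * (gweight s ρ φ a k * gweight s ρ φ b k) ≤
      κ * ∑' k, gweight s (ρ + s) φ a k ^ 2 := by
  have hnonneg (k : ℤ × ℤ) : 0 ≤ gweight s ρ φ a k * gweight s ρ φ b k :=
    mul_nonneg (gweight_nonneg _ _ _ _ _) (gweight_nonneg _ _ _ _ _)
  rw [← ENNReal.ofReal_le_ofReal_iff (mul_nonneg hκ (tsum_nonneg fun k => sq_nonneg _)),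
    ENNReal.ofReal_mul hκ, ← gnorm_sq_eq_ofReal_tsum hρs ha,
    ENNReal.ofReal_sum_of_nonneg fun k _ => mul_nonneg zero_le_two (hnonneg k)]
  calc _ ≤ ∑' k, ENNReal.ofReal (2 * (gweight s ρ φ a k * gweight s ρ φ b k)) :=
        ENNReal.sum_le_tsum F
    _ = 2 * ∑' k, ENNReal.ofReal (gweight s ρ φ a k * gweight s ρ φ b k) := by
      simp only [ENNReal.ofReal_mul zero_le_two, ENNReal.ofReal_ofNat, ENNReal.tsum_mul_left]
    _ ≤ 2 * c * gnorm s ρ φ a * gnorm s (ρ + s) φ a ^ 2 := by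
      rw [mul_assoc 2 c, mul_assoc 2]
      gcongr
    _ ≤ _ := by gcongr

theorem gnorm_le_of_forall_two_mul_gnorm_le {s σ ν α β : ℝ} {c N : ℝ≥0∞} (hs : 0 < s)
    (hσ : 0 < σ) (hβ : 0 ≤ β) (hβν : 2 * β ≤ ν ^ 2)
    (hc : ∀ φ w : ℝ, w ≤ φ → ∀ a : ℤ × ℤ → ℂ, a 0 = 0 →
      ∑' k, ENNReal.ofReal (gweight s (σ * s) φ a k * gweight s (σ * s) φ (Bcoef s w a a) k) ≤
        c * gnorm s (σ * s) φ a * gnorm s ((σ + 1) * s) φ a ^ 2)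
    {t₁ t₂ : ℝ} (ht : t₁ ≤ t₂) {W : ℝ → ℝ} (hW : ∀ t ∈ Icc t₁ t₂, ν * W t ≤ α + β * t)
    {u : ℝ → ℤ × ℤ → ℂ} (hu0 : ∀ t ∈ Icc t₁ t₂, u t 0 = 0)
    (hu : ∀ t ∈ Icc t₁ t₂, ∀ k : ℤ × ℤ, k ≠ 0 →
      HasDerivWithinAt (fun τ => u τ k)
        (((-(ν ^ 2 / 2) * znorm k ^ (2 * s) : ℝ) : ℂ) * u t k - Bcoef s (ν * W t) (u t) (u t) k)
        (Icc t₁ t₂) t)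
    (hN : N ≠ ⊤) (huN : ∀ t ∈ Icc t₁ t₂, gnorm s ((σ + 1) * s) (α + β * t) (u t) ≤ N)
    (hsmall : ∀ t ∈ Icc t₁ t₂,
      2 * c * gnorm s (σ * s) (α + β * t) (u t) ≤ ENNReal.ofReal (ν ^ 2 - 2 * β)) :
    gnorm s (σ * s) (α + β * t₂) (u t₂) ≤ gnorm s (σ * s) (α + β * t₁) (u t₁) := by
  rw [show (σ + 1) * s = σ * s + s by ring] at hc huN
  have hρ : 0 < σ * s := mul_pos hσ hs
  have hρs : σ * s + s ≠ 0 := by positivity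
  set r := fun τ k => gweight s (σ * s) (α + β * τ) (u τ) k ^ 2
  set y := fun τ k => gweight s (σ * s + s) (α + β * τ) (u τ) k ^ 2
  have hys : ∀ τ ∈ Icc t₁ t₂, Summable (y τ) := fun τ hτ =>
    summable_gweight_sq hρs (ne_top_of_le_ne_top hN (huN τ hτ))
  have hrs : ∀ τ ∈ Icc t₁ t₂, Summable (r τ) := fun τ hτ =>
    (hys τ hτ).of_nonneg_of_le (fun k => sq_nonneg _) fun k =>
      pow_le_pow_left₀ (gweight_nonneg _ _ _ _ _) (gweight_mono (by linarith) _ (hu0 τ hτ) k) 2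
  have hyM : ∀ τ ∈ Icc t₁ t₂, ∑' k, y τ k ≤ (N ^ 2).toReal := fun τ hτ =>
    (ENNReal.ofReal_le_iff_le_toReal (ENNReal.pow_ne_top hN)).mp <| by
      rw [← gnorm_sq_eq_ofReal_tsum hρs (hys τ hτ)]
      exact pow_le_pow_left' (huN τ hτ) 2
  have hmono := tsum_le_tsum_of_hasDerivWithinAt_le ht
    (fun τ hτ k => exists_hasDerivWithinAt_gweight_sq_le hs.le hρ hβ k (hu τ hτ k))
    (fun k => continuousOn_gweight_sq hρs k fun hk τ hτ => (hu τ hτ k hk).continuousWithinAt)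
    (fun τ k => sq_nonneg _) hys hyM
    (fun τ hτ => sum_two_mul_gweight_mul_gweight_le hρs (by linarith) (hys τ hτ)
      (hc _ _ (hW τ hτ) _ (hu0 τ hτ)) (hsmall τ hτ))
    (hrs t₁ (left_mem_Icc.mpr ht)) (hrs t₂ (right_mem_Icc.mpr ht))
  rw [← ENNReal.pow_le_pow_left_iff two_ne_zero,
    gnorm_sq_eq_ofReal_tsum hρ.ne' (hrs t₁ (left_mem_Icc.mpr ht)),
    gnorm_sq_eq_ofReal_tsum hρ.ne' (hrs t₂ (right_mem_Icc.mpr ht))]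
  exact ENNReal.ofReal_le_ofReal hmono

/-- **Energy estimate for the transformed SQG equation.**
For `s ∈ (1/2,1]`, `σ ∈ (1/s,2)` there is `C ≥ 1` (depending only on `s, σ`) such that: for
`ν > 0`, `α > 0`, `0 < β < ν²/2`, `φ(t) = α + βt`, `T₀ ≤ T`, a continuous `W` with
`φ(t) − νW(t) ≥ 0` on `[T₀,T]`, and `u` with vanishing zero mode, differentiable Fourier
coefficients solving `d/dt u(t)(k) = −(ν²/2)|k|^{2s}u(t)(k) − B_{νW(t)}(u(t),u(t))(k)`,
continuous Gevrey norm `t ↦ ‖u(t)‖_{σs,φ(t)}` and `sup_{[T₀,T]}‖u(t)‖_{(σ+1)s,φ(t)} < ∞`: if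
`C‖u(T₀)‖_{σs,φ(T₀)} ≤ ν²/2 − β` then `‖u(t)‖_{σs,φ(t)} ≤ ‖u(T₀)‖_{σs,φ(T₀)}` on `[T₀,T]`. -/
theorem transformed_SQG_energy_estimate
    (s σ : ℝ) (hs : s ∈ Set.Ioc (1/2 : ℝ) 1) (hσ : σ ∈ Set.Ioo (1/s) 2) :
    ∃ C : ℝ, 1 ≤ C ∧
      ∀ (ν α β : ℝ), 0 < ν → 0 < α → 0 < β → β < ν ^ 2 / 2 →
      ∀ (T₀ T : ℝ), T₀ ≤ T →
      ∀ W : ℝ → ℝ, ContinuousOn W (Set.Icc T₀ T) →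
        (∀ t ∈ Set.Icc T₀ T, 0 ≤ (α + β * t) - ν * W t) →
      ∀ u : ℝ → ℤ × ℤ → ℂ,
        (∀ t ∈ Set.Icc T₀ T, u t 0 = 0) →
        (∀ t ∈ Set.Icc T₀ T, ∀ k : ℤ × ℤ, k ≠ 0 →
          HasDerivWithinAt (fun τ => u τ k)
            (((-(ν ^ 2 / 2) * znorm k ^ (2 * s) : ℝ) : ℂ) * u t k
              - Bcoef s (ν * W t) (u t) (u t) k)
            (Set.Icc T₀ T) t) →
        ContinuousOn (fun t => gnorm s (σ * s) (α + β * t) (u t)) (Set.Icc T₀ T) →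
        (⨆ t ∈ Set.Icc T₀ T, gnorm s ((σ + 1) * s) (α + β * t) (u t)) < ⊤ →
        ENNReal.ofReal C * gnorm s (σ * s) (α + β * T₀) (u T₀) ≤
          ENNReal.ofReal (ν ^ 2 / 2 - β) →
        ∀ t ∈ Set.Icc T₀ T,
          gnorm s (σ * s) (α + β * t) (u t) ≤ gnorm s (σ * s) (α + β * T₀) (u T₀) := by
  have hs0 : 0 < s := by linarith [hs.1]
  have hσs : 1 < σ * s := (div_lt_iff₀ hs0).mp hσ.1
  obtain ⟨c, hc, hNL⟩ := exists_tsum_gweight_mul_gweight_Bcoef_le hs.1.le hs.2 hσs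
  -- with this `C`, smallness at `T₀` gives `2c ‖u T₀‖ ≤ ν²/2 - β < ν² - 2β`
  refine ⟨max 1 (2 * c).toReal, le_max_left _ _, ?_⟩
  intro ν α β _ _ hβ hβν T₀ T _ W _ hW u hu0 hu hcont hbdd hsmall t ht
  have h2c : 2 * c ≤ ENNReal.ofReal (max 1 (2 * c).toReal) :=
    (ENNReal.ofReal_toReal (by finiteness)).symm.trans_le
      (ENNReal.ofReal_le_ofReal (le_max_right _ _))
  refine hcont.le_left_of_forall_le_of_mem
    (U := {x | 2 * c * x < ENNReal.ofReal (ν ^ 2 - 2 * β)})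
    (isOpen_lt (ENNReal.continuous_const_mul (by finiteness)) continuous_const) (fun x hx => ?_)
    (fun t₁ ht₁ t₂ ht₂ hU => ?_) t ht
  · calc 2 * c * x ≤ ENNReal.ofReal (max 1 (2 * c).toReal) * gnorm s (σ * s) (α + β * T₀) (u T₀) :=
          mul_le_mul' h2c hx
      _ ≤ ENNReal.ofReal (ν ^ 2 / 2 - β) := hsmall
      _ < ENNReal.ofReal (ν ^ 2 - 2 * β) :=
        (ENNReal.ofReal_lt_ofReal_iff (by linarith)).mpr (by linarith)
  have hsub : Icc t₁ t₂ ⊆ Icc T₀ T := Icc_subset_Icc ht₁.1 ht₂.2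
  exact gnorm_le_of_forall_two_mul_gnorm_le hs0 (by nlinarith) hβ.le (by linarith) hNL ht₂.1
    (fun τ hτ => by linarith [hW τ (hsub hτ)]) (fun τ hτ => hu0 τ (hsub hτ))
    (fun τ hτ k hk => (hu τ (hsub hτ) k hk).mono hsub) hbdd.ne
    (fun τ hτ => le_iSup₂ (f := fun t _ => gnorm s ((σ + 1) * s) (α + β * t) (u t)) τ (hsub hτ))
    (fun τ hτ => (hU τ hτ).le)

end
end

section
/- Let W be a standard Brownian motion on a probability space (Ω,F,P) and let α > 0, β > 0. Then the probability that the process W_t − βt exceeds α in finite time is exactly e^{−2αβ}; that is, P({ω : ∃ t ≥ 0, W_t(ω) − βt > α}) = e^{−2αβ}. -/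
/-!
With `θ = 2β`, `exp (θ (W_t - β t))` has mean one at every time, and so does the exponential of
the random walk obtained by sampling `W_t - β t` on a grid and stopping it the first time it
exceeds `α`. At that time the walk lies above `α`, so `e^{2αβ} P(the walk exceeds α) ≤ 1`; as
paths are continuous, dyadic grids exhaust the event, which gives the upper bound. For the lower
bound take the grid `j / n` up to time `n`: paths that stay below `α` contribute at most
`e^{βα - β² n / 2}` to the mean, and by a Chernoff bound an overshoot of `α` by more than `ε`
contributes at most `n² e^{2βα + βε - ε² n / 2}`, so `1 ≤ e^{2β(α + ε)} P(hit) + o(1)`.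
-/

open scoped ENNReal NNReal
open MeasureTheory

noncomputable section

/-- `W` is a standard Brownian motion on `(Ω, F, P)`: it starts at `0`, has almost surely
continuous sample paths, independent increments, and Gaussian increments
`W_t − W_u ∼ N(0, t − u)` for `0 ≤ u ≤ t`. -/
structure IsStdBM {Ω : Type*} [MeasurableSpace Ω] (P : Measure Ω) (W : ℝ → Ω → ℝ) : Prop where
  meas : ∀ t, Measurable (W t)
  init : ∀ ω, W 0 ω = 0
  cont : ∀ᵐ ω ∂P, ContinuousOn (fun t => W t ω) (Set.Ici 0)
  indep : ∀ (n : ℕ) (t : Fin (n + 1) → ℝ), (∀ i, 0 ≤ t i) → Monotone t →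
    ProbabilityTheory.iIndepFun
      (fun i : Fin n => fun ω => W (t i.succ) ω - W (t i.castSucc) ω) P
  gauss : ∀ u t : ℝ, 0 ≤ u → u ≤ t →
    Measure.map (fun ω => W t ω - W u ω) P =
      ProbabilityTheory.gaussianReal 0 (Real.toNNReal (t - u))

open Real ProbabilityTheory Filter Topology

section StoppedWalk

variable {Ω : Type*} {X : ℕ → Ω → ℝ} {α θ : ℝ}

/-- `stoppedOver X α k = X (min k τ)`, where `τ` is the first index at which `X` exceeds `α`. -/
def stoppedOver (X : ℕ → Ω → ℝ) (α : ℝ) : ℕ → Ω → ℝ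
  | 0, ω => X 0 ω
  | k + 1, ω => if ∀ j ≤ k, X j ω ≤ α then X (k + 1) ω else stoppedOver X α k ω

lemma stoppedOver_eq_of_forall_le {k : ℕ} {ω : Ω} (h : ∀ j ≤ k, X j ω ≤ α) :
    stoppedOver X α k ω = X k ω := by
  cases k with
  | zero => rfl
  | succ k => exact if_pos fun j hj => h j (hj.trans k.le_succ)

lemma stoppedOver_succ_of_forall_le {k : ℕ} {ω : Ω} (h : ∀ j ≤ k, X j ω ≤ α) :
    stoppedOver X α (k + 1) ω = stoppedOver X α k ω + (X (k + 1) ω - X k ω) := by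
  rw [stoppedOver, if_pos h, stoppedOver_eq_of_forall_le h, add_sub_cancel]

lemma stoppedOver_succ_of_not_forall_le {k : ℕ} {ω : Ω} (h : ¬∀ j ≤ k, X j ω ≤ α) :
    stoppedOver X α (k + 1) ω = stoppedOver X α k ω :=
  if_neg h

lemma lt_stoppedOver {k : ℕ} {ω : Ω} (h : ∃ j ≤ k, α < X j ω) :
    α < stoppedOver X α k ω := by
  induction k with
  | zero =>
    obtain ⟨j, hj, hlt⟩ := h
    rwa [Nat.le_zero.1 hj] at hlt
  | succ k ih =>
    obtain ⟨j, hj, hlt⟩ := h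
    by_cases hk : ∀ i ≤ k, X i ω ≤ α
    · obtain rfl : j = k + 1 := by
        by_contra hne
        exact (hk j (by omega)).not_gt hlt
      rwa [stoppedOver, if_pos hk]
    · rw [stoppedOver_succ_of_not_forall_le hk]
      push Not at hk
      exact ih hk

lemma exists_stoppedOver_le_add_sub {k : ℕ} {ω : Ω} (h0 : X 0 ω ≤ α)
    (h : ∃ j ≤ k, α < X j ω) :
    ∃ j < k, stoppedOver X α k ω ≤ α + (X (j + 1) ω - X j ω) := by
  induction k with
  | zero =>
    obtain ⟨j, hj, hlt⟩ := h
    rw [Nat.le_zero.1 hj] at hlt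
    exact absurd h0 hlt.not_ge
  | succ k ih =>
    by_cases hk : ∀ i ≤ k, X i ω ≤ α
    · refine ⟨k, k.lt_succ_self, ?_⟩
      rw [stoppedOver, if_pos hk]
      linarith [hk k le_rfl]
    · rw [stoppedOver_succ_of_not_forall_le hk]
      push Not at hk
      obtain ⟨j, hj, hle⟩ := ih hk
      exact ⟨j, hj.trans k.lt_succ_self, hle⟩

lemma ofReal_exp_stoppedOver_le {c : ℝ} (hθ : 0 ≤ θ) (hc : 0 ≤ c) {ω : Ω}
    (h0 : X 0 ω ≤ α) (ε : ℝ) (K : ℕ) :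
    ENNReal.ofReal (exp (θ * stoppedOver X α K ω))
      ≤ ENNReal.ofReal (exp (θ * (α + ε))) * {ω | ∃ j ≤ K, α < X j ω}.indicator 1 ω
        + {ω | X K ω ≤ α}.indicator (fun ω => ENNReal.ofReal (exp (θ * X K ω))) ω
        + ENNReal.ofReal (exp (θ * α - c * ε))
          * ∑ j ∈ Finset.range K,
              ENNReal.ofReal (exp ((θ + c) * (X (j + 1) ω - X j ω))) := by
  by_cases hsurv : ∀ j ≤ K, X j ω ≤ α
  · refine le_add_right (le_add_left (le_of_eq ?_))
    rw [Set.indicator_of_mem (show ω ∈ {ω | X K ω ≤ α} from hsurv K le_rfl),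
      stoppedOver_eq_of_forall_le hsurv]
  push Not at hsurv
  obtain ⟨j, hjK, hj⟩ := exists_stoppedOver_le_add_sub h0 hsurv
  by_cases hsmall : X (j + 1) ω - X j ω ≤ ε
  · refine le_add_right (le_add_right ?_)
    rw [Set.indicator_of_mem (show ω ∈ {ω | ∃ j ≤ K, α < X j ω} from hsurv), Pi.one_apply,
      mul_one]
    gcongr
    linarith
  · -- Chernoff: an overshoot `x > ε` satisfies `θ x ≤ (θ + c) x - c ε`.
    refine le_add_left (le_trans ?_ (mul_le_mul_of_nonneg_left (Finset.single_le_sum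
      (f := fun j => ENNReal.ofReal (exp ((θ + c) * (X (j + 1) ω - X j ω))))
      (fun _ _ => zero_le) (Finset.mem_range.2 hjK)) zero_le))
    rw [← ENNReal.ofReal_mul (exp_nonneg _), ← exp_add]
    gcongr
    nlinarith

abbrev pastIncrements (X : ℕ → Ω → ℝ) (k : ℕ) : MeasurableSpace Ω :=
  ⨆ i ∈ Set.Iio k, MeasurableSpace.comap (X (i + 1) - X i) inferInstance

lemma pastIncrements_mono (X : ℕ → Ω → ℝ) : Monotone (pastIncrements X) :=
  fun _ _ hkl => biSup_mono fun _ hi => lt_of_lt_of_le hi hkl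

lemma measurable_pastIncrements (hX0 : ∀ ω, X 0 ω = 0) {j k : ℕ} (hjk : j ≤ k) :
    Measurable[pastIncrements X k] (X j) := by
  induction j with
  | zero => simp [funext hX0]
  | succ j ih =>
    have hincr : Measurable[pastIncrements X k] (X (j + 1) - X j) :=
      measurable_iff_comap_le.2 <| le_biSup (fun i => MeasurableSpace.comap
        (X (i + 1) - X i) inferInstance) (show j ∈ Set.Iio k from hjk)
    rw [← add_sub_cancel (X j) (X (j + 1))]
    exact (ih (by omega)).add hincr

lemma measurableSet_forall_le_pastIncrements (hX0 : ∀ ω, X 0 ω = 0) (α : ℝ) (k : ℕ) :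
    MeasurableSet[pastIncrements X k] {ω | ∀ j ≤ k, X j ω ≤ α} := by
  simp only [Set.ofPred_forall]
  exact .iInter fun j => .iInter fun hj =>
    measurableSet_le (measurable_pastIncrements hX0 hj) measurable_const

lemma measurable_stoppedOver_pastIncrements (hX0 : ∀ ω, X 0 ω = 0) (α : ℝ) (k : ℕ) :
    Measurable[pastIncrements X k] (stoppedOver X α k) := by
  induction k with
  | zero => exact measurable_pastIncrements (k := 0) hX0 le_rfl
  | succ k ih =>
    exact Measurable.ite ((pastIncrements_mono X k.le_succ) _
        (measurableSet_forall_le_pastIncrements hX0 α k))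
      (measurable_pastIncrements hX0 le_rfl) (ih.mono (pastIncrements_mono X k.le_succ) le_rfl)

variable [MeasurableSpace Ω] {P : Measure Ω}

lemma pastIncrements_le (hX : ∀ k, Measurable (X k)) (k : ℕ) :
    pastIncrements X k ≤ ‹MeasurableSpace Ω› :=
  iSup₂_le fun i _ => ((hX (i + 1)).sub (hX i)).comap_le

lemma measurable_stoppedOver (hX0 : ∀ ω, X 0 ω = 0) (hX : ∀ k, Measurable (X k)) (α : ℝ)
    (k : ℕ) : Measurable (stoppedOver X α k) :=
  (measurable_stoppedOver_pastIncrements hX0 α k).mono (pastIncrements_le hX k) le_rfl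

lemma indep_pastIncrements (hX : ∀ k, Measurable (X k))
    (hindep : iIndepFun (fun k => X (k + 1) - X k) P) (k : ℕ) :
    Indep (pastIncrements X k) (MeasurableSpace.comap (X (k + 1) - X k) inferInstance) P := by
  simpa [pastIncrements] using indep_iSup_of_disjoint
    (fun i => ((hX (i + 1)).sub (hX i)).comap_le) ((iIndepFun_iff_iIndep _ _ _).1 hindep)
    (S := Set.Iio k) (T := {k}) (by simp)

lemma lintegral_exp_stoppedOver [IsProbabilityMeasure P] (hX0 : ∀ ω, X 0 ω = 0)
    (hX : ∀ k, Measurable (X k)) (hindep : iIndepFun (fun k => X (k + 1) - X k) P)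
    (hmgf : ∀ k, ∫⁻ ω, ENNReal.ofReal (exp (θ * (X (k + 1) ω - X k ω))) ∂P = 1)
    (α : ℝ) (k : ℕ) :
    ∫⁻ ω, ENNReal.ofReal (exp (θ * stoppedOver X α k ω)) ∂P = 1 := by
  induction k with
  | zero => simp [stoppedOver, hX0]
  | succ k ih =>
    set A := {ω | ∀ j ≤ k, X j ω ≤ α}
    set E : Ω → ℝ≥0∞ := fun ω => ENNReal.ofReal (exp (θ * stoppedOver X α k ω))
    set G : Ω → ℝ≥0∞ := fun ω => ENNReal.ofReal (exp (θ * (X (k + 1) ω - X k ω)))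
    have hA := measurableSet_forall_le_pastIncrements hX0 α k
    have hE : Measurable[pastIncrements X k] E := by
      have := measurable_stoppedOver_pastIncrements hX0 α k
      fun_prop
    have hG : Measurable[MeasurableSpace.comap (X (k + 1) - X k) inferInstance] G :=
      (by fun_prop : Measurable fun x => ENNReal.ofReal (exp (θ * x))).comp (comap_measurable _)
    have hle := pastIncrements_le hX k
    have hD := ((hX (k + 1)).sub (hX k)).comap_le
    have hsplit : (fun ω => ENNReal.ofReal (exp (θ * stoppedOver X α (k + 1) ω)))
        = fun ω => A.indicator E ω * G ω + Aᶜ.indicator E ω := by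
      funext ω
      by_cases hω : ω ∈ A
      · rw [Set.indicator_of_mem hω, Set.indicator_of_notMem (Set.notMem_compl_iff.2 hω),
          add_zero, stoppedOver_succ_of_forall_le hω, mul_add, exp_add,
          ENNReal.ofReal_mul (exp_nonneg _)]
      · rw [Set.indicator_of_notMem hω, Set.indicator_of_mem hω, zero_mul, zero_add,
          stoppedOver_succ_of_not_forall_le hω]
    rw [hsplit, lintegral_add_left (f := fun ω => A.indicator E ω * G ω)
        (((hE.indicator hA).mono hle le_rfl).mul (hG.mono hD le_rfl)),
      lintegral_mul_eq_lintegral_mul_lintegral_of_independent_measurableSpace hle hD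
        (indep_pastIncrements hX hindep k) (hE.indicator hA) hG,
      hmgf k, mul_one, ← lintegral_add_left ((hE.mono hle le_rfl).indicator (hle _ hA))]
    simpa only [A, Set.indicator_self_add_compl_apply] using ih

lemma measurableSet_exists_lt (hX : ∀ k, Measurable (X k)) (α : ℝ) (K : ℕ) :
    MeasurableSet {ω | ∃ j ≤ K, α < X j ω} := by
  simp only [Set.ofPred_exists, Set.ofPred_and]
  exact .iUnion fun j => (MeasurableSet.const _).inter (measurableSet_lt measurable_const (hX j))

lemma measure_exists_lt_le [IsProbabilityMeasure P] (hX0 : ∀ ω, X 0 ω = 0)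
    (hX : ∀ k, Measurable (X k)) (hindep : iIndepFun (fun k => X (k + 1) - X k) P)
    (hmgf : ∀ k, ∫⁻ ω, ENNReal.ofReal (exp (θ * (X (k + 1) ω - X k ω))) ∂P = 1)
    (hθ : 0 ≤ θ) (α : ℝ) (K : ℕ) :
    P {ω | ∃ j ≤ K, α < X j ω} ≤ ENNReal.ofReal (exp (-(θ * α))) := by
  set c := ENNReal.ofReal (exp (θ * α))
  have hc : c * P {ω | ∃ j ≤ K, α < X j ω} ≤ 1 := calc
    c * P {ω | ∃ j ≤ K, α < X j ω}
      ≤ c * P {ω | c ≤ ENNReal.ofReal (exp (θ * stoppedOver X α K ω))} := by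
        refine mul_le_mul_of_nonneg_left (measure_mono fun ω hω => ?_) zero_le
        exact ENNReal.ofReal_le_ofReal (exp_le_exp.2
          (mul_le_mul_of_nonneg_left (lt_stoppedOver hω).le hθ))
    _ ≤ ∫⁻ ω, ENNReal.ofReal (exp (θ * stoppedOver X α K ω)) ∂P :=
        mul_meas_ge_le_lintegral (by have := measurable_stoppedOver hX0 hX α K; fun_prop) c
    _ = 1 := lintegral_exp_stoppedOver hX0 hX hindep hmgf α K
  rwa [exp_neg, ENNReal.ofReal_inv_of_pos (exp_pos _), ENNReal.le_inv_iff_mul_le, mul_comm]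

lemma one_le_exp_mul_measure_exists_lt_add [IsProbabilityMeasure P] (hX0 : ∀ ω, X 0 ω = 0)
    (hX : ∀ k, Measurable (X k)) (hindep : iIndepFun (fun k => X (k + 1) - X k) P)
    (hmgf : ∀ k, ∫⁻ ω, ENNReal.ofReal (exp (θ * (X (k + 1) ω - X k ω))) ∂P = 1)
    (hθ : 0 ≤ θ) (hα : 0 ≤ α) {c : ℝ} (hc : 0 ≤ c) (ε : ℝ) (K : ℕ) :
    1 ≤ ENNReal.ofReal (exp (θ * (α + ε))) * P {ω | ∃ j ≤ K, α < X j ω}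
      + ∫⁻ ω in {ω | X K ω ≤ α}, ENNReal.ofReal (exp (θ * X K ω)) ∂P
      + ENNReal.ofReal (exp (θ * α - c * ε))
        * ∑ j ∈ Finset.range K,
            ∫⁻ ω, ENNReal.ofReal (exp ((θ + c) * (X (j + 1) ω - X j ω))) ∂P := by
  have hH := measurableSet_exists_lt hX α K
  have hS : MeasurableSet {ω | X K ω ≤ α} := measurableSet_le (hX K) measurable_const
  rw [← lintegral_exp_stoppedOver hX0 hX hindep hmgf α K]
  refine (lintegral_mono fun ω =>
    ofReal_exp_stoppedOver_le hθ hc ((hX0 ω).trans_le hα) ε K).trans (le_of_eq ?_)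
  rw [lintegral_add_left (by fun_prop), lintegral_add_left (by fun_prop),
    lintegral_const_mul _ (measurable_one.indicator hH), lintegral_indicator_one hH,
    lintegral_indicator hS, lintegral_const_mul _ (by fun_prop),
    lintegral_finsetSum _ (fun j _ => by fun_prop)]

end StoppedWalk

lemma tendsto_exp_sub_mul_add_mul_self_mul_exp_sub {a b c d : ℝ} (hb : 0 < b) (hd : 0 < d) :
    Tendsto (fun x : ℝ => exp (a - b * x) + x * x * exp (c - d * x)) atTop (𝓝 0) := by
  have h₁ : Tendsto (fun x : ℝ => exp a * exp (-(b * x))) atTop (𝓝 0) := by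
    simpa using (tendsto_exp_neg_atTop_nhds_zero.comp
      (tendsto_id.const_mul_atTop hb)).const_mul (exp a)
  have h₂ := (tendsto_rpow_mul_exp_neg_mul_atTop_nhds_zero 2 d hd).const_mul (exp c)
  rw [mul_zero] at h₂
  simpa using (h₁.add h₂).congr fun x => by
    rw [rpow_two, sub_eq_add_neg, sub_eq_add_neg, exp_add, exp_add, neg_mul, sq]
    ring

lemma exists_dyadic_lt_of_continuousWithinAt {f : ℝ → ℝ} {t α : ℝ} (ht : 0 ≤ t)
    (hf : ContinuousWithinAt f (Set.Ici 0) t) (hα : α < f t) :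
    ∃ n : ℕ, ∃ j ≤ n * 2 ^ n, α < f (j / 2 ^ n) := by
  set d : ℕ → ℝ := fun n => ⌊t * 2 ^ n⌋₊ / 2 ^ n
  have hd_le (n : ℕ) : d n ≤ t := by
    rw [div_le_iff₀ (by positivity)]
    exact Nat.floor_le (by positivity)
  have hd_ge (n : ℕ) : t - (1 / 2) ^ n ≤ d n := by
    rw [one_div_pow, le_div_iff₀ (by positivity), sub_mul, one_div_mul_cancel (by positivity)]
    linarith [Nat.lt_floor_add_one (t * 2 ^ n)]
  have hd : Tendsto d atTop (𝓝[Set.Ici 0] t) := by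
    refine tendsto_nhdsWithin_iff.2 ⟨tendsto_of_tendsto_of_tendsto_of_le_of_le ?_
      tendsto_const_nhds hd_ge hd_le, .of_forall fun n => Set.mem_Ici.2 (by positivity)⟩
    simpa using tendsto_const_nhds.sub (tendsto_pow_atTop_nhds_zero_of_lt_one
      (by norm_num : (0 : ℝ) ≤ 1 / 2) (by norm_num))
  obtain ⟨n, hlt, hn⟩ := (((hf.tendsto.comp hd).eventually (lt_mem_nhds hα)).and
    (tendsto_natCast_atTop_atTop.eventually_ge_atTop t)).exists
  refine ⟨n, ⌊t * 2 ^ n⌋₊, Nat.floor_le_of_le ?_, hlt⟩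
  push_cast
  gcongr

lemma monotone_setOf_exists_dyadic_lt {Ω : Type*} (f : ℝ → Ω → ℝ) (α : ℝ) :
    Monotone fun n : ℕ => {ω | ∃ j ≤ n * 2 ^ n, α < f (j / 2 ^ n) ω} := by
  refine monotone_nat_of_le_succ fun n ω ⟨j, hj, hlt⟩ => ⟨2 * j, ?_, ?_⟩
  · rw [pow_succ]
    nlinarith [Nat.zero_le (2 ^ n)]
  · have hdouble : ((2 * j : ℕ) : ℝ) / 2 ^ (n + 1) = j / 2 ^ n := by push_cast; ring
    rwa [hdouble]

section Brownian

variable {Ω : Type*} [MeasurableSpace Ω] {P : Measure Ω} {W : ℝ → Ω → ℝ}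

lemma iIndepFun_of_forall_fin {E : Type*} [MeasurableSpace E] {f : ℕ → Ω → E}
    (h : ∀ n, iIndepFun (fun i : Fin n => f i) P) : iIndepFun f P := by
  refine iIndepFun_iff_finset.2 fun s => ?_
  obtain ⟨n, hn⟩ : ∃ n, ∀ i ∈ s, i < n :=
    ⟨s.sup id + 1, fun i hi => Nat.lt_succ_of_le (Finset.le_sup (f := id) hi)⟩
  exact (h n).precomp (g := fun i : s => (⟨i, hn i i.2⟩ : Fin n))
    fun i j hij => Subtype.ext (congrArg Fin.val hij)

lemma lintegral_exp_mul_of_map_eq_gaussianReal {Y : Ω → ℝ} (hY : Measurable Y) {μ : ℝ}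
    {v : ℝ≥0} (h : P.map Y = gaussianReal μ v) (s : ℝ) :
    ∫⁻ ω, ENNReal.ofReal (exp (s * Y ω)) ∂P
      = ENNReal.ofReal (exp (μ * s + v * s ^ 2 / 2)) := by
  rw [← lintegral_map (f := fun x => ENNReal.ofReal (exp (s * x))) (by fun_prop) hY, h,
    ← ofReal_integral_eq_lintegral_ofReal (integrable_exp_mul_gaussianReal s)
      (ae_of_all _ fun _ => (exp_pos _).le)]
  exact congrArg ENNReal.ofReal (congrFun mgf_id_gaussianReal s)

namespace IsStdBM

lemma iIndepFun_increments (hW : IsStdBM P W) (β : ℝ) {u : ℕ → ℝ} (hu0 : 0 ≤ u 0)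
    (hu : Monotone u) :
    iIndepFun (fun k ω => (W (u (k + 1)) ω - β * u (k + 1)) - (W (u k) ω - β * u k)) P := by
  have hincr : iIndepFun (fun k ω => W (u (k + 1)) ω - W (u k) ω) P :=
    iIndepFun_of_forall_fin fun n => by
      simpa using hW.indep n (fun i => u i) (fun i => hu0.trans (hu (Nat.zero_le _)))
        fun i j hij => hu hij
  convert hincr.comp (fun k x => x - β * (u (k + 1) - u k))
    (fun k => measurable_id.sub_const _) using 1
  ext k ω
  simp only [Function.comp_apply]
  ring

lemma lintegral_exp_increment (hW : IsStdBM P W) (β s : ℝ) {u t : ℝ} (hu : 0 ≤ u)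
    (hut : u ≤ t) :
    ∫⁻ ω, ENNReal.ofReal (exp (s * ((W t ω - β * t) - (W u ω - β * u)))) ∂P
      = ENNReal.ofReal (exp ((t - u) * (s ^ 2 / 2 - β * s))) := by
  have hsplit (ω : Ω) : ENNReal.ofReal (exp (s * ((W t ω - β * t) - (W u ω - β * u))))
      = ENNReal.ofReal (exp (-(β * s * (t - u))))
        * ENNReal.ofReal (exp (s * (W t ω - W u ω))) := by
    rw [← ENNReal.ofReal_mul (exp_nonneg _), ← exp_add]
    ring_nf
  simp_rw [hsplit]
  rw [lintegral_const_mul _ (by have := hW.meas t; have := hW.meas u; fun_prop),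
    lintegral_exp_mul_of_map_eq_gaussianReal (Y := fun ω => W t ω - W u ω)
      ((hW.meas t).sub (hW.meas u)) (hW.gauss u t hu hut),
    Real.coe_toNNReal _ (sub_nonneg.2 hut), ← ENNReal.ofReal_mul (exp_nonneg _), ← exp_add]
  ring_nf

lemma lintegral_exp_drift (hW : IsStdBM P W) (β s : ℝ) {t : ℝ} (ht : 0 ≤ t) :
    ∫⁻ ω, ENNReal.ofReal (exp (s * (W t ω - β * t))) ∂P
      = ENNReal.ofReal (exp (t * (s ^ 2 / 2 - β * s))) := by
  simpa [hW.init] using hW.lintegral_exp_increment β s le_rfl ht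

lemma lintegral_exp_two_mul_increment (hW : IsStdBM P W) (β : ℝ) {u : ℕ → ℝ}
    (hu0 : 0 ≤ u 0) (hu : Monotone u) (k : ℕ) :
    ∫⁻ ω, ENNReal.ofReal (exp (2 * β * ((W (u (k + 1)) ω - β * u (k + 1))
      - (W (u k) ω - β * u k)))) ∂P = 1 := by
  rw [hW.lintegral_exp_increment β _ (hu0.trans (hu k.zero_le)) (hu k.le_succ)]
  ring_nf
  simp

lemma measure_exists_lt_le [IsProbabilityMeasure P] (hW : IsStdBM P W) {β : ℝ}
    (hβ : 0 ≤ β) (α : ℝ) {u : ℕ → ℝ} (hu0 : u 0 = 0) (hu : Monotone u) (K : ℕ) :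
    P {ω | ∃ j ≤ K, α < W (u j) ω - β * u j} ≤ ENNReal.ofReal (exp (-(2 * α * β))) := by
  have := _root_.measure_exists_lt_le (X := fun k ω => W (u k) ω - β * u k)
    (by simp [hu0, hW.init]) (fun k => (hW.meas _).sub_const _)
    (hW.iIndepFun_increments β hu0.ge hu) (hW.lintegral_exp_two_mul_increment β hu0.ge hu)
    (by positivity) α K
  rwa [show 2 * β * α = 2 * α * β by ring] at this

lemma one_le_exp_mul_measure_exists_lt_add [IsProbabilityMeasure P] (hW : IsStdBM P W)
    {α β ε : ℝ} (hα : 0 ≤ α) (hβ : 0 ≤ β) (hε : 0 ≤ ε) {n : ℕ} (hn : 0 < n)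
    (T : ℕ) :
    1 ≤ ENNReal.ofReal (exp (2 * β * (α + ε)))
        * P {ω | ∃ j ≤ T * n, α < W (j / n) ω - β * (j / n)}
      + ENNReal.ofReal (exp (β * α - β ^ 2 / 2 * T)
        + T * n * exp (2 * β * α + β * ε - ε ^ 2 / 2 * n)) := by
  set u : ℕ → ℝ := fun j => j / n
  have hu : Monotone u := fun i j hij => by simp only [u]; gcongr
  have hstep (j : ℕ) : u (j + 1) - u j = 1 / n := by simp only [u]; push_cast; ring
  have hT : u (T * n) = T := by simp only [u]; push_cast; field_simp
  have key := _root_.one_le_exp_mul_measure_exists_lt_add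
    (X := fun k ω => W (u k) ω - β * u k) (by simp [u, hW.init])
    (fun k => (hW.meas _).sub_const _) (hW.iIndepFun_increments β (by simp [u]) hu)
    (hW.lintegral_exp_two_mul_increment β (by simp [u]) hu) (by positivity) hα
    (c := ε * n) (by positivity) ε (T * n)
  simp only [hT, add_assoc] at key
  refine key.trans ?_
  rw [ENNReal.ofReal_add (by positivity) (by positivity)]
  gcongr ?_ + (?_ + ?_)
  · rfl
  · -- On `{X ≤ α}`, `exp (2βX) ≤ exp (βα) exp (βX)`, whose mean is explicit.
    calc ∫⁻ ω in {ω | W T ω - β * T ≤ α},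
          ENNReal.ofReal (exp (2 * β * (W T ω - β * T))) ∂P
        ≤ ∫⁻ ω in {ω | W T ω - β * T ≤ α},
            ENNReal.ofReal (exp (β * α))
              * ENNReal.ofReal (exp (β * (W T ω - β * T))) ∂P := by
          refine setLIntegral_mono (by have := hW.meas T; fun_prop) fun ω hω => ?_
          rw [← ENNReal.ofReal_mul (exp_nonneg _), ← exp_add]
          gcongr
          nlinarith [show W T ω - β * T ≤ α from hω]
      _ ≤ ∫⁻ ω, ENNReal.ofReal (exp (β * α))
            * ENNReal.ofReal (exp (β * (W T ω - β * T))) ∂P :=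
          setLIntegral_le_lintegral _ _
      _ = ENNReal.ofReal (exp (β * α - β ^ 2 / 2 * T)) := by
          rw [lintegral_const_mul _ (by have := hW.meas T; fun_prop),
            hW.lintegral_exp_drift β β (Nat.cast_nonneg T), ← ENNReal.ofReal_mul (exp_nonneg _),
            ← exp_add]
          ring_nf
  · have hincr (j : ℕ) : ∫⁻ ω, ENNReal.ofReal (exp ((2 * β + ε * n)
          * ((W (u (j + 1)) ω - β * u (j + 1)) - (W (u j) ω - β * u j)))) ∂P
        = ENNReal.ofReal (exp (1 / n * ((2 * β + ε * n) ^ 2 / 2 - β * (2 * β + ε * n)))) := by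
      rw [hW.lintegral_exp_increment β _ (by positivity) (hu j.le_succ), hstep]
    simp_rw [hincr]
    rw [Finset.sum_const, Finset.card_range, nsmul_eq_mul, ← ENNReal.ofReal_natCast,
      ← ENNReal.ofReal_mul (Nat.cast_nonneg _), ← ENNReal.ofReal_mul (exp_nonneg _)]
    refine le_of_eq (congrArg ENNReal.ofReal ?_)
    rw [Nat.cast_mul, mul_left_comm, ← exp_add]
    congr 2
    field_simp
    ring

lemma measure_exists_drift_lt_le [IsProbabilityMeasure P] (hW : IsStdBM P W) {β : ℝ}
    (hβ : 0 ≤ β) (α : ℝ) :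
    P {ω | ∃ t, 0 ≤ t ∧ α < W t ω - β * t}
      ≤ ENNReal.ofReal (exp (-(2 * α * β))) := calc
  _ ≤ P (⋃ n : ℕ, {ω | ∃ j ≤ n * 2 ^ n, α < W (j / 2 ^ n) ω - β * (j / 2 ^ n)}) := by
      refine measure_mono_ae (hW.cont.mono fun ω hω ⟨t, ht, hlt⟩ => Set.mem_iUnion.2 ?_)
      exact exists_dyadic_lt_of_continuousWithinAt (f := fun t => W t ω - β * t) ht
        ((hω t ht).sub (continuousWithinAt_const.mul continuousWithinAt_id)) hlt
  _ = ⨆ n : ℕ, P {ω | ∃ j ≤ n * 2 ^ n, α < W (j / 2 ^ n) ω - β * (j / 2 ^ n)} :=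
      (monotone_setOf_exists_dyadic_lt (fun t ω => W t ω - β * t) α).measure_iUnion
  _ ≤ _ := iSup_le fun n => hW.measure_exists_lt_le hβ α (u := fun j => j / 2 ^ n)
      (by simp) (fun i j hij => by dsimp only; gcongr) (n * 2 ^ n)

lemma ofReal_exp_le_measure_exists_drift_lt [IsProbabilityMeasure P] (hW : IsStdBM P W)
    {α β ε : ℝ} (hα : 0 ≤ α) (hβ : 0 < β) (hε : 0 < ε) :
    ENNReal.ofReal (exp (-(2 * β * (α + ε))))
      ≤ P {ω | ∃ t, 0 ≤ t ∧ α < W t ω - β * t} := by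
  set p := P {ω | ∃ t, 0 ≤ t ∧ α < W t ω - β * t}
  set a := ENNReal.ofReal (exp (2 * β * (α + ε)))
  set r : ℝ → ℝ := fun x => exp (β * α - β ^ 2 / 2 * x)
    + x * x * exp (2 * β * α + β * ε - ε ^ 2 / 2 * x)
  have hbound (n : ℕ) (hn : 1 ≤ n) : 1 ≤ a * p + ENNReal.ofReal (r n) := by
    refine (hW.one_le_exp_mul_measure_exists_lt_add hα hβ.le hε.le hn n).trans ?_
    gcongr
    exact measure_mono fun ω ⟨j, _, hj⟩ => ⟨j / n, by positivity, hj⟩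
  have hlim : Tendsto (fun n : ℕ => a * p + ENNReal.ofReal (r n)) atTop (𝓝 (a * p)) := by
    simpa using tendsto_const_nhds.add (ENNReal.tendsto_ofReal
      ((tendsto_exp_sub_mul_add_mul_self_mul_exp_sub (by positivity) (by positivity)).comp
        tendsto_natCast_atTop_atTop))
  have h1 : 1 ≤ a * p := ge_of_tendsto hlim (eventually_atTop.2 ⟨1, hbound⟩)
  rwa [exp_neg, ENNReal.ofReal_inv_of_pos (exp_pos _), ENNReal.inv_le_iff_le_mul
    (fun _ => (ENNReal.ofReal_pos.2 (exp_pos _)).ne') (fun h => absurd h ENNReal.ofReal_ne_top)]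

end IsStdBM

end Brownian

/-- **Brownian motion with drift.** For `α, β > 0`, the probability that `W_t − βt` exceeds
`α` in finite time is exactly `e^{−2αβ}`. -/
theorem brownian_drift_hitting_probability
    {Ω : Type*} [MeasurableSpace Ω] (P : Measure Ω) [IsProbabilityMeasure P]
    (W : ℝ → Ω → ℝ) (hW : IsStdBM P W) (α β : ℝ) (hα : 0 < α) (hβ : 0 < β) :
    P {ω : Ω | ∃ t : ℝ, 0 ≤ t ∧ W t ω - β * t > α} =
      ENNReal.ofReal (Real.exp (-(2 * α * β))) := by
  have hlim : Tendsto (fun ε => ENNReal.ofReal (exp (-(2 * β * (α + ε))))) (𝓝[>] 0)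
      (𝓝 (ENNReal.ofReal (exp (-(2 * α * β))))) := by
    have hcont : Continuous fun ε => ENNReal.ofReal (exp (-(2 * β * (α + ε)))) :=
      ENNReal.continuous_ofReal.comp (by fun_prop)
    simpa [mul_right_comm] using (hcont.tendsto 0).mono_left nhdsWithin_le_nhds
  exact le_antisymm (hW.measure_exists_drift_lt_le hβ.le α) (le_of_tendsto hlim
    (eventually_nhdsWithin_of_forall fun ε hε =>
      hW.ofReal_exp_le_measure_exists_drift_lt hα.le hβ (Set.mem_Ioi.1 hε)))
end
end
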